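/- Exponential decay of correlations for the grand canonical measure: Fix ρ ∈ (1/2,1). There exist constants C = C(ρ) > 0 and C′ = C′(ρ) > 0 such that for all integers k ≥ 1 and ℓ ≥ 1 and all σ₁, σ₂ ∈ {0,1}^{Λ_k} having no two adjacent empty sites, setting L = 2k+ℓ and J(σ₁,σ₂) = Σ W_ρ^L(τ), the sum running over all τ ∈ {0,1}^{Λ_L} with τ(x) = σ₁(x) for 1 ≤ x ≤ k and τ(k+ℓ+x) = σ₂(x) for 1 ≤ x ≤ k, one has |J(σ₁,σ₂) − W_ρ^k(σ₁)·W_ρ^k(σ₂)| ≤ C′·e^{−Cℓ}·W_ρ^k(σ₁)·W_ρ^k(σ₂). -/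

import Mathlib

/-!
The weights `W_ρ^ℓ` are the cylinder probabilities of a stationary two-state Markov chain: with
`q = (1-ρ)/ρ`, `W_ρ^ℓ(σ) = π(σ 1) * ∏ x ∈ [1, ℓ), M (σ x) (σ (x+1))` for the law `π = (1-ρ, ρ)` and
the transition matrix `M = [[0, 1], [q, 1-q]]`. Summing over the `ℓ` free sites between the two
blocks replaces the product of transitions across the gap by the entry `M^(ℓ+1) (σ₁ k) (σ₂ 1)`,
so the covariance is `W(σ₁) * Q(σ₂) * (M^(ℓ+1) (σ₁ k) (σ₂ 1) - π (σ₂ 1))`, where `Q(σ₂)` is the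
product of the transitions inside `σ₂`. As `M = P - q • (1 - P)` with `P` the rank-one projection
onto `π`, `M^n = P + (-q)^n • (1 - P)`, and `|M^(ℓ+1) a b - π b| ≤ q^ℓ * π b` gives the decay
with `C = -log q` and `C' = 1`.
-/

open scoped BigOperators
open scoped Classical

namespace FEP

/-- The number of particles of `σ` in `Λ_ℓ = {1,…,ℓ}`. -/
def pcount (ℓ : ℕ) (σ : ℕ → Bool) : ℕ :=
  ∑ x ∈ Finset.Icc 1 ℓ, (if σ x then 1 else 0)

/-- `σ` has no two adjacent empty sites in `Λ_ℓ`. -/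
def noAdj (ℓ : ℕ) (σ : ℕ → Bool) : Prop :=
  ∀ x ∈ Finset.Ico 1 ℓ, (σ x = true ∨ σ (x + 1) = true)

/-- The cylinder weight `W_ρ^ℓ(σ)` of the infinite-volume grand canonical measure `π_ρ`. -/
noncomputable def W (ρ : ℝ) (ℓ : ℕ) (σ : ℕ → Bool) : ℝ :=
  if ∀ x ∈ Finset.Ico 1 ℓ, (σ x = true ∨ σ (x + 1) = true) then
    (1 - ρ) * ((1 - ρ) / ρ) ^ ((ℓ : ℤ) - 1 - (pcount ℓ σ : ℤ)) *
      ((2 * ρ - 1) / ρ) ^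
        (2 * (pcount ℓ σ : ℤ) - (ℓ : ℤ) + 1 - (if σ 1 then 1 else 0) -
          (if σ ℓ then 1 else 0))
  else 0

/-- Extension of a configuration on `Λ_L` (indexed by `Fin L`, site `i` of `Λ_L` being
`⟨i-1,_⟩`) to a configuration `ℕ → Bool`. -/
def extSeg (L : ℕ) (σ : Fin L → Bool) : ℕ → Bool :=
  fun x => if h : 1 ≤ x ∧ x ≤ L then σ ⟨x - 1, by omega⟩ else false

end FEP

theorem IsIdempotentElem.add_smul_one_sub_pow {R A : Type*} [CommRing R] [Ring A] [Algebra R A]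
    {P : A} (hP : IsIdempotentElem P) (c : R) (n : ℕ) :
    (P + c • (1 - P)) ^ n = P + c ^ n • (1 - P) := by
  induction n with
  | zero => simp
  | succ n ih =>
    rw [pow_succ, ih]
    simp only [add_mul, mul_add, smul_mul_assoc, mul_smul_comm, hP.eq, hP.mul_one_sub_self,
      hP.one_sub_mul_self, hP.one_sub.eq, smul_zero, add_zero, zero_add, smul_smul, pow_succ,
      mul_comm c]

namespace FEP

open Finset

section Paths

variable {α R : Type*}

def bridge {n : ℕ} (a : α) (η : Fin n → α) (b : α) : ℕ → α :=
  fun i => if h₀ : i = 0 then a else if h : i ≤ n then η ⟨i - 1, by omega⟩ else b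

lemma bridge_zero {n : ℕ} (a : α) (η : Fin n → α) (b : α) : bridge a η b 0 = a := rfl

lemma bridge_cons_succ {n : ℕ} (a c b : α) (η : Fin n → α) (i : ℕ) :
    bridge a (Fin.cons c η : Fin (n + 1) → α) b (i + 1) = bridge c η b i := by
  rcases i with _ | i
  · simp [bridge]
  · by_cases hi : i + 1 ≤ n
    · simp only [bridge, dif_neg (Nat.succ_ne_zero _), dif_pos (Nat.succ_le_succ hi),
        dif_pos hi, Nat.add_one_sub_one]
      exact Fin.cons_succ (α := fun _ => α) c η ⟨i, hi⟩
    · simp [bridge, hi]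

theorem sum_prod_bridge [CommSemiring R] [Fintype α] [DecidableEq α] (M : Matrix α α R)
    (n : ℕ) (a b : α) :
    ∑ η : Fin n → α, ∏ i ∈ range (n + 1), M (bridge a η b i) (bridge a η b (i + 1)) =
      (M ^ (n + 1)) a b := by
  induction n generalizing a with
  | zero => simp [bridge]
  | succ n ih =>
    rw [pow_succ', Matrix.mul_apply, ← (Fin.consEquiv fun _ => α).sum_comp,
      Fintype.sum_prod_type]
    refine sum_congr rfl fun c _ => ?_
    rw [← ih c, mul_sum]
    refine sum_congr rfl fun η _ => ?_
    simp [Fin.consEquiv, prod_range_succ' _ (n + 1), bridge_cons_succ, bridge_zero, mul_comm]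

end Paths

section Splice

variable {α R : Type*}

def splice (k ℓ : ℕ) (σ₁ : ℕ → α) (η : Fin ℓ → α) (σ₂ : ℕ → α) : ℕ → α :=
  fun x => if h₀ : x ≤ k then σ₁ x else if h : x ≤ k + ℓ then η ⟨x - k - 1, by omega⟩
    else σ₂ (x - k - ℓ)

variable {k ℓ : ℕ} {σ₁ σ₂ : ℕ → α} {η : Fin ℓ → α}

lemma splice_of_le {x : ℕ} (hx : x ≤ k) : splice k ℓ σ₁ η σ₂ x = σ₁ x := dif_pos hx

lemma splice_of_mem {x : ℕ} (hk : k < x) (hx : x ≤ k + ℓ) :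
    splice k ℓ σ₁ η σ₂ x = η ⟨x - k - 1, by omega⟩ := by
  simp [splice, hx, hk.not_ge]

lemma splice_of_gt {x : ℕ} (hx : k + ℓ < x) : splice k ℓ σ₁ η σ₂ x = σ₂ (x - k - ℓ) := by
  simp [splice, hx.not_ge, (le_self_add.trans_lt hx).not_ge]

lemma splice_add_add {x : ℕ} (hx : 1 ≤ x) : splice k ℓ σ₁ η σ₂ (k + ℓ + x) = σ₂ x := by
  rw [splice_of_gt (by omega)]; congr 1; omega

lemma splice_add_eq_bridge {i : ℕ} (hi : i ≤ ℓ + 1) :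
    splice k ℓ σ₁ η σ₂ (k + i) = bridge (σ₁ k) η (σ₂ 1) i := by
  rcases Nat.eq_zero_or_pos i with rfl | hi₀
  · exact splice_of_le le_rfl
  rcases hi.lt_or_eq with hi | rfl
  · rw [splice_of_mem (by omega) (by omega), bridge, dif_neg (by omega), dif_pos (by omega)]
    congr 2; omega
  · rw [← add_assoc, splice_add_add le_rfl]; simp [bridge]

def chainWeight [CommMonoid R] (π : α → R) (M : Matrix α α R) (ℓ : ℕ) (σ : ℕ → α) : R :=
  π (σ 1) * ∏ x ∈ Ico 1 ℓ, M (σ x) (σ (x + 1))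

lemma chainWeight_congr [CommMonoid R] (π : α → R) (M : Matrix α α R) {ℓ : ℕ} (hℓ : 1 ≤ ℓ)
    {σ σ' : ℕ → α} (h : ∀ x ∈ Icc 1 ℓ, σ x = σ' x) :
    chainWeight π M ℓ σ = chainWeight π M ℓ σ' := by
  unfold chainWeight
  rw [h 1 (by simp [hℓ])]
  refine congrArg _ (prod_congr rfl fun x hx => ?_)
  simp only [mem_Ico] at hx
  rw [h x (by simp; omega), h (x + 1) (by simp; omega)]

lemma chainWeight_nonneg [CommSemiring R] [PartialOrder R] [IsOrderedRing R] {π : α → R}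
    {M : Matrix α α R} (hπ : ∀ a, 0 ≤ π a) (hM : ∀ a b, 0 ≤ M a b) {ℓ : ℕ} {σ : ℕ → α} :
    0 ≤ chainWeight π M ℓ σ :=
  mul_nonneg (hπ _) (prod_nonneg fun _ _ => hM _ _)

theorem chainWeight_splice [CommMonoid R] (π : α → R) (M : Matrix α α R) (hk : 1 ≤ k) :
    chainWeight π M (2 * k + ℓ) (splice k ℓ σ₁ η σ₂) =
      chainWeight π M k σ₁ *
        (∏ i ∈ range (ℓ + 1), M (bridge (σ₁ k) η (σ₂ 1) i) (bridge (σ₁ k) η (σ₂ 1) (i + 1))) *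
        ∏ x ∈ Ico 1 k, M (σ₂ x) (σ₂ (x + 1)) := by
  have hleft : ∏ x ∈ Ico 1 k, M (splice k ℓ σ₁ η σ₂ x) (splice k ℓ σ₁ η σ₂ (x + 1)) =
      ∏ x ∈ Ico 1 k, M (σ₁ x) (σ₁ (x + 1)) :=
    prod_congr rfl fun x hx => by
      rw [splice_of_le (mem_Ico.1 hx).2.le, splice_of_le (mem_Ico.1 hx).2]
  have hmid : ∏ x ∈ Ico k (k + ℓ + 1), M (splice k ℓ σ₁ η σ₂ x) (splice k ℓ σ₁ η σ₂ (x + 1)) =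
      ∏ i ∈ range (ℓ + 1), M (bridge (σ₁ k) η (σ₂ 1) i) (bridge (σ₁ k) η (σ₂ 1) (i + 1)) := by
    rw [prod_Ico_eq_prod_range, show k + ℓ + 1 - k = ℓ + 1 by omega]
    refine prod_congr rfl fun i hi => ?_
    rw [splice_add_eq_bridge (by simp at hi; omega), add_assoc,
      splice_add_eq_bridge (by simp at hi; omega)]
  have hright : ∏ x ∈ Ico (k + ℓ + 1) (2 * k + ℓ),
      M (splice k ℓ σ₁ η σ₂ x) (splice k ℓ σ₁ η σ₂ (x + 1)) =
      ∏ x ∈ Ico 1 k, M (σ₂ x) (σ₂ (x + 1)) := by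
    rw [show 2 * k + ℓ = k + (k + ℓ) by omega, add_comm (k + ℓ), ← prod_Ico_add']
    refine prod_congr rfl fun x hx => ?_
    rw [add_comm x, splice_add_add (mem_Ico.1 hx).1, add_assoc, splice_add_add (by omega)]
  rw [chainWeight, chainWeight, splice_of_le hk,
    ← prod_Ico_consecutive _ hk (by omega : k ≤ 2 * k + ℓ), ← prod_Ico_consecutive _ (by omega : k ≤ k + ℓ + 1) (by omega : k + ℓ + 1 ≤ 2 * k + ℓ),
    hleft, hmid, hright, mul_assoc, mul_assoc]

theorem sum_chainWeight_splice [CommSemiring R] [Fintype α] [DecidableEq α] (π : α → R)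
    (M : Matrix α α R) (hk : 1 ≤ k) :
    ∑ η : Fin ℓ → α, chainWeight π M (2 * k + ℓ) (splice k ℓ σ₁ η σ₂) =
      chainWeight π M k σ₁ * (M ^ (ℓ + 1)) (σ₁ k) (σ₂ 1) *
        ∏ x ∈ Ico 1 k, M (σ₂ x) (σ₂ (x + 1)) := by
  simp_rw [chainWeight_splice π M hk, ← sum_mul, ← mul_sum, sum_prod_bridge]

end Splice

lemma extSeg_apply {L x : ℕ} (τ : Fin L → Bool) (hx : x ∈ Icc 1 L) :
    extSeg L τ x = τ ⟨x - 1, by simp at hx; omega⟩ :=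
  dif_pos (mem_Icc.1 hx)

lemma extSeg_restrict {L x : ℕ} (s : ℕ → Bool) (hx : x ∈ Icc 1 L) :
    extSeg L (fun i => s (i + 1)) x = s x := by
  rw [extSeg_apply _ hx]
  exact congrArg s (Nat.sub_add_cancel (mem_Icc.1 hx).1)

lemma splice_middle_eq {k ℓ : ℕ} {σ₁ σ₂ : ℕ → Bool} (τ : Fin (2 * k + ℓ) → Bool)
    (h₁ : ∀ x ∈ Icc 1 k, extSeg _ τ x = σ₁ x) (h₂ : ∀ x ∈ Icc 1 k, extSeg _ τ (k + ℓ + x) = σ₂ x) :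
    (fun i : Fin (2 * k + ℓ) => splice k ℓ σ₁ (fun j : Fin ℓ => τ ⟨k + j, by omega⟩) σ₂ (i + 1)) =
      τ := by
  funext i
  obtain ⟨i, hi⟩ := i
  dsimp only
  rcases lt_or_ge i k with hik | hik
  · rw [splice_of_le hik, ← h₁ _ (by simp; omega), extSeg_apply _ (by simp; omega)]
    rfl
  rcases lt_or_ge i (k + ℓ) with hiℓ | hiℓ
  · rw [splice_of_mem (by omega) (by omega)]
    congr 2; simp; omega
  · rw [splice_of_gt (by omega), ← h₂ _ (by simp; omega), extSeg_apply _ (by simp; omega)]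
    congr 2; omega

theorem sum_extSeg_constrained {R : Type*} [AddCommMonoid R] (k ℓ : ℕ) (σ₁ σ₂ : ℕ → Bool)
    (f : (ℕ → Bool) → R) (hf : ∀ σ σ', (∀ x ∈ Icc 1 (2 * k + ℓ), σ x = σ' x) → f σ = f σ') :
    (∑ τ : Fin (2 * k + ℓ) → Bool,
        if (∀ x ∈ Icc 1 k, extSeg (2 * k + ℓ) τ x = σ₁ x) ∧
           (∀ x ∈ Icc 1 k, extSeg (2 * k + ℓ) τ (k + ℓ + x) = σ₂ x)
        then f (extSeg (2 * k + ℓ) τ) else 0) =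
      ∑ η : Fin ℓ → Bool, f (splice k ℓ σ₁ η σ₂) := by
  -- The `if` carries classical `Decidable` instances, so the predicate must be given explicitly.
  rw [← sum_filter fun τ : Fin (2 * k + ℓ) → Bool => (∀ x ∈ Icc 1 k, extSeg _ τ x = σ₁ x) ∧
    ∀ x ∈ Icc 1 k, extSeg _ τ (k + ℓ + x) = σ₂ x]
  set L := 2 * k + ℓ
  let middle : (Fin L → Bool) → Fin ℓ → Bool := fun τ j => τ ⟨k + j, by omega⟩
  let glue : (Fin ℓ → Bool) → Fin L → Bool := fun η i => splice k ℓ σ₁ η σ₂ (i + 1)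
  have hglue : ∀ η, ∀ x ∈ Icc 1 L, extSeg L (glue η) x = splice k ℓ σ₁ η σ₂ x :=
    fun η x hx => extSeg_restrict _ hx
  refine sum_nbij' middle glue (fun _ _ => mem_univ _) (fun η _ => ?_)
    (fun τ hτ => ?_) (fun η _ => ?_) (fun τ hτ => hf _ _ fun x hx => ?_)
  · simp only [mem_filter, mem_univ, true_and]
    refine ⟨fun x hx => ?_, fun x hx => ?_⟩
    · rw [hglue η x (by simp at hx ⊢; omega), splice_of_le (mem_Icc.1 hx).2]
    · rw [hglue η _ (by simp at hx ⊢; omega), splice_add_add (mem_Icc.1 hx).1]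
  · simp only [mem_filter] at hτ
    exact splice_middle_eq τ hτ.2.1 hτ.2.2
  · funext j
    simp only [middle, glue]
    rw [splice_of_mem (by omega) (by omega)]
    congr 1; ext; simp; omega
  · simp only [mem_filter] at hτ
    calc extSeg L τ x = extSeg L (glue (middle τ)) x := by
          rw [show glue (middle τ) = τ from splice_middle_eq τ hτ.2.1 hτ.2.2]
      _ = splice k ℓ σ₁ (middle τ) σ₂ x := hglue _ x hx

section GrandCanonical

variable {ρ : ℝ}

def stationary (ρ : ℝ) : Bool → ℝ
  | false => 1 - ρ
  | true => ρ

noncomputable def transition (ρ : ℝ) : Matrix Bool Bool ℝ :=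
  Matrix.of fun
    | false, false => 0
    | false, true => 1
    | true, false => (1 - ρ) / ρ
    | true, true => (2 * ρ - 1) / ρ

lemma pcount_succ (ℓ : ℕ) (σ : ℕ → Bool) :
    pcount (ℓ + 1) σ = pcount ℓ σ + if σ (ℓ + 1) then 1 else 0 :=
  sum_Icc_succ_top (Nat.le_add_left 1 ℓ) _

lemma W_one (hρ : ρ ≠ 1) (σ : ℕ → Bool) : W ρ 1 σ = stationary ρ (σ 1) := by
  have h1ρ : 1 - ρ ≠ 0 := sub_ne_zero.2 hρ.symm
  rw [W, if_pos (by simp), pcount_succ, pcount]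
  rcases σ 1 <;> simp [stationary]
  field_simp

lemma W_succ (hρ : ρ ∈ Set.Ioo (1 / 2 : ℝ) 1) {ℓ : ℕ} (hℓ : 1 ≤ ℓ) (σ : ℕ → Bool) :
    W ρ (ℓ + 1) σ = W ρ ℓ σ * transition ρ (σ ℓ) (σ (ℓ + 1)) := by
  obtain ⟨hρ₁, hρ₂⟩ := hρ
  have hq : (1 - ρ) / ρ ≠ 0 := by apply div_ne_zero <;> linarith
  have hr : (2 * ρ - 1) / ρ ≠ 0 := by apply div_ne_zero <;> linarith
  have hIco : ∀ P : ℕ → Prop, (∀ x ∈ Ico 1 (ℓ + 1), P x) ↔ (∀ x ∈ Ico 1 ℓ, P x) ∧ P ℓ := by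
    intro P
    rw [Nat.Ico_succ_right_eq_insert_Ico hℓ, forall_mem_insert, and_comm]
  unfold W
  by_cases hσ : ∀ x ∈ Ico 1 ℓ, σ x = true ∨ σ (x + 1) = true
  swap
  · rw [if_neg hσ, if_neg fun h => hσ ((hIco _).1 h).1, zero_mul]
  by_cases hedge : σ ℓ = true ∨ σ (ℓ + 1) = true
  swap
  · obtain ⟨hl, hl'⟩ := not_or.1 hedge
    rw [if_neg fun h => hedge ((hIco _).1 h).2]
    simp only [Bool.not_eq_true] at hl hl'
    simp [hl, hl', transition]
  rw [if_pos ((hIco _).2 ⟨hσ, hedge⟩), if_pos hσ, pcount_succ]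
  push_cast
  rcases hl : σ ℓ <;> rcases hl' : σ (ℓ + 1) <;>
    simp only [hl, hl', transition, Matrix.of_apply, Bool.false_eq_true, ↓reduceIte] at hedge ⊢
  · simp at hedge
  · ring_nf
  · conv_rhs => rw [mul_right_comm _ _ ((1 - ρ) / ρ), mul_assoc (1 - ρ), ← zpow_add_one₀ hq]
    ring_nf
  · rw [mul_assoc _ _ ((2 * ρ - 1) / ρ), ← zpow_add_one₀ hr]
    ring_nf

lemma W_eq_chainWeight (hρ : ρ ∈ Set.Ioo (1 / 2 : ℝ) 1) {ℓ : ℕ} (hℓ : 1 ≤ ℓ) (σ : ℕ → Bool) :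
    W ρ ℓ σ = chainWeight (stationary ρ) (transition ρ) ℓ σ := by
  induction ℓ, hℓ using Nat.le_induction with
  | base => simp [chainWeight, W_one hρ.2.ne]
  | succ ℓ hℓ ih =>
    rw [W_succ hρ hℓ, ih, chainWeight, chainWeight, prod_Ico_succ_top hℓ, mul_assoc]

lemma stationary_nonneg (hρ : ρ ∈ Set.Icc (0 : ℝ) 1) (a : Bool) : 0 ≤ stationary ρ a := by
  cases a <;> simp [stationary, hρ.1, hρ.2]

lemma transition_nonneg (hρ : ρ ∈ Set.Icc (1 / 2 : ℝ) 1) (a b : Bool) : 0 ≤ transition ρ a b := by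
  obtain ⟨hρ₁, hρ₂⟩ := hρ
  cases a <;> cases b <;> simp only [transition, Matrix.of_apply] <;>
    first | positivity | (apply div_nonneg <;> linarith)

lemma W_nonneg (hρ : ρ ∈ Set.Ioo (1 / 2 : ℝ) 1) {ℓ : ℕ} (hℓ : 1 ≤ ℓ) (σ : ℕ → Bool) :
    0 ≤ W ρ ℓ σ :=
  W_eq_chainWeight hρ hℓ σ ▸ chainWeight_nonneg
    (stationary_nonneg ⟨by linarith [hρ.1], hρ.2.le⟩) (transition_nonneg ⟨hρ.1.le, hρ.2.le⟩)

theorem sum_extSeg_W_eq (hρ : ρ ∈ Set.Ioo (1 / 2 : ℝ) 1) {k : ℕ} (ℓ : ℕ) (hk : 1 ≤ k)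
    (σ₁ σ₂ : ℕ → Bool) :
    (∑ τ : Fin (2 * k + ℓ) → Bool,
        if (∀ x ∈ Icc 1 k, extSeg (2 * k + ℓ) τ x = σ₁ x) ∧
           (∀ x ∈ Icc 1 k, extSeg (2 * k + ℓ) τ (k + ℓ + x) = σ₂ x)
        then W ρ (2 * k + ℓ) (extSeg (2 * k + ℓ) τ) else 0) =
      W ρ k σ₁ * (transition ρ ^ (ℓ + 1)) (σ₁ k) (σ₂ 1) *
        ∏ x ∈ Ico 1 k, transition ρ (σ₂ x) (σ₂ (x + 1)) := by
  have hW : ∀ {n}, 1 ≤ n → W ρ n = chainWeight (stationary ρ) (transition ρ) n :=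
    fun hn => funext (W_eq_chainWeight hρ hn)
  rw [sum_extSeg_constrained k ℓ σ₁ σ₂ _ fun σ σ' h => by
      rw [hW (by omega)]; exact chainWeight_congr _ _ (by omega) h,
    hW (by omega), hW hk, sum_chainWeight_splice _ _ hk]

noncomputable def stationaryProj (ρ : ℝ) : Matrix Bool Bool ℝ := Matrix.of fun _ b => stationary ρ b

lemma isIdempotentElem_stationaryProj : IsIdempotentElem (stationaryProj ρ) := by
  ext a b
  simp [stationaryProj, Matrix.mul_apply, stationary, ← add_mul]

lemma transition_eq (hρ : ρ ≠ 0) :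
    transition ρ = stationaryProj ρ + (-((1 - ρ) / ρ)) • (1 - stationaryProj ρ) := by
  ext a b
  cases a <;> cases b <;> simp [transition, stationaryProj, stationary] <;> field_simp <;> ring

lemma transition_pow_apply (hρ : ρ ≠ 0) (n : ℕ) (a b : Bool) :
    (transition ρ ^ n) a b =
      stationary ρ b + (-((1 - ρ) / ρ)) ^ n * ((1 : Matrix Bool Bool ℝ) a b - stationary ρ b) := by
  rw [transition_eq hρ, isIdempotentElem_stationaryProj.add_smul_one_sub_pow]
  simp [stationaryProj]

lemma abs_transition_pow_sub_le (hρ : ρ ∈ Set.Ioo (1 / 2 : ℝ) 1) (n : ℕ) (a b : Bool) :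
    |(transition ρ ^ (n + 1)) a b - stationary ρ b| ≤ ((1 - ρ) / ρ) ^ n * stationary ρ b := by
  obtain ⟨hρ₁, hρ₂⟩ := hρ
  have hq : 0 < (1 - ρ) / ρ := div_pos (by linarith) (by linarith)
  have hδ : |(1 : Matrix Bool Bool ℝ) a b - stationary ρ b| ≤ ρ := by
    rw [Matrix.one_apply, abs_le]
    cases b <;> split_ifs <;> simp only [stationary] <;> constructor <;> linarith
  rw [transition_pow_apply (by linarith), add_sub_cancel_left, abs_mul, abs_pow, abs_neg,
    abs_of_pos hq, pow_succ, mul_assoc]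
  gcongr
  calc (1 - ρ) / ρ * |(1 : Matrix Bool Bool ℝ) a b - stationary ρ b|
      ≤ (1 - ρ) / ρ * ρ := by gcongr
    _ = 1 - ρ := div_mul_cancel₀ _ (by linarith)
    _ ≤ stationary ρ b := by cases b <;> simp only [stationary] <;> linarith

end GrandCanonical

/-- **Exponential decay of correlations for the grand canonical measure.** -/
theorem decay_of_correlations (ρ : ℝ) (hρ : ρ ∈ Set.Ioo (1/2 : ℝ) 1) :
    ∃ C C' : ℝ, 0 < C ∧ 0 < C' ∧
      ∀ k ℓ : ℕ, 1 ≤ k → 1 ≤ ℓ →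
      ∀ σ₁ σ₂ : ℕ → Bool, noAdj k σ₁ → noAdj k σ₂ →
        |(∑ τ : Fin (2 * k + ℓ) → Bool,
            if (∀ x ∈ Finset.Icc 1 k, extSeg (2 * k + ℓ) τ x = σ₁ x) ∧
               (∀ x ∈ Finset.Icc 1 k, extSeg (2 * k + ℓ) τ (k + ℓ + x) = σ₂ x)
            then W ρ (2 * k + ℓ) (extSeg (2 * k + ℓ) τ) else 0)
          - W ρ k σ₁ * W ρ k σ₂|
        ≤ C' * Real.exp (-C * ℓ) * (W ρ k σ₁ * W ρ k σ₂) := by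
  have hq : 0 < (1 - ρ) / ρ := div_pos (by linarith [hρ.2]) (by linarith [hρ.1])
  have hq₁ : (1 - ρ) / ρ < 1 := (div_lt_one (by linarith [hρ.1])).2 (by linarith [hρ.1])
  refine ⟨-Real.log ((1 - ρ) / ρ), 1, neg_pos.2 (Real.log_neg hq hq₁), one_pos,
    fun k ℓ hk _ σ₁ σ₂ _ _ => ?_⟩
  rw [sum_extSeg_W_eq hρ ℓ hk, W_eq_chainWeight hρ hk σ₂, chainWeight, neg_neg,
    ← Real.rpow_def_of_pos hq, Real.rpow_natCast]
  set Q := ∏ x ∈ Ico 1 k, transition ρ (σ₂ x) (σ₂ (x + 1))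
  have hQ : 0 ≤ Q := prod_nonneg fun _ _ => transition_nonneg ⟨hρ.1.le, hρ.2.le⟩ _ _
  have hWQ : 0 ≤ W ρ k σ₁ * Q := mul_nonneg (W_nonneg hρ hk σ₁) hQ
  calc _ = W ρ k σ₁ * Q * |(transition ρ ^ (ℓ + 1)) (σ₁ k) (σ₂ 1) - stationary ρ (σ₂ 1)| := by
        rw [← abs_of_nonneg hWQ, ← abs_mul]; ring_nf
    _ ≤ W ρ k σ₁ * Q * (((1 - ρ) / ρ) ^ ℓ * stationary ρ (σ₂ 1)) :=
        mul_le_mul_of_nonneg_left (abs_transition_pow_sub_le hρ ℓ _ _) hWQ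
    _ = _ := by ring

end FEP
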